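/- Let d ≥ 1, let b : ℝ^d → ℝ^d and k : ℝ^d → ℝ with k(x) ≥ 0 for all x, let x* ∈ ℝ^d, let 0 < r ≤ R, and let C ≥ 0 satisfy ‖b(x)‖ + k(x) ≤ C for all x with ‖x − x*‖ ≤ R. For α > 0 define w_α(x) = exp(−α‖x − x*‖²/2) − exp(−α r²/2). Then there exists α₀ > 0 such that for every α ≥ α₀ and every x with r/2 ≤ ‖x − x*‖ ≤ R one has 𝒜w_α(x) > 0. -/

import Mathlib

/-!
Write `g(y) = exp (-α ‖y - x*‖² / 2)`, so that `w_α = g - exp (-α r² / 2)`. Then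
`∇g(x) = -α g(x) (x - x*)` and `Δg(x) = g(x) (α² ‖x - x*‖² - d α)`, hence
`𝒜 w_α (x) = g(x) (α² ‖x - x*‖² / 2 - d α / 2 - α ⟪b x, x - x*⟫ - k x) + k(x) exp (-α r² / 2)`.
The last term is nonnegative, and on the annulus the term `α² ‖x - x*‖² / 2 ≥ α² r² / 8`,
quadratic in `α`, beats `d α / 2 + α R C + C` once `α` is large.
-/

open MeasureTheory

noncomputable section

/-- Laplacian of `f : ℝ^d → ℝ` at `x`, computed as the trace of the second derivative. -/
def lap {d : ℕ} (f : EuclideanSpace ℝ (Fin d) → ℝ) (x : EuclideanSpace ℝ (Fin d)) : ℝ :=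
  ∑ i, fderiv ℝ (fderiv ℝ f) x (EuclideanSpace.single i 1) (EuclideanSpace.single i 1)

/-- The elliptic generator with killing:
`𝒜 f (x) = (1/2) Δf(x) + ⟨b(x), ∇f(x)⟩ − k(x) f(x)`. -/
def gen {d : ℕ} (b : EuclideanSpace ℝ (Fin d) → EuclideanSpace ℝ (Fin d))
    (k : EuclideanSpace ℝ (Fin d) → ℝ) (f : EuclideanSpace ℝ (Fin d) → ℝ)
    (x : EuclideanSpace ℝ (Fin d)) : ℝ :=
  (1 / 2) * lap f x + (inner ℝ (b x) (gradient f x) : ℝ) - k x * f x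

open Real InnerProductSpace

theorem gradient_sub_const {E : Type*} [NormedAddCommGroup E] [InnerProductSpace ℝ E]
    [CompleteSpace E] (f : E → ℝ) (c : ℝ) (x : E) :
    gradient (fun y => f y - c) x = gradient f x := by
  simp only [gradient, fderiv_sub_const]

section Gaussian

variable {E : Type*} [NormedAddCommGroup E] [InnerProductSpace ℝ E] (α : ℝ) (a : E)

theorem hasFDerivAt_exp_neg_mul_norm_sub_sq (x : E) :
    HasFDerivAt (fun y => exp (-α * ‖y - a‖ ^ 2 / 2))
      ((-α * exp (-α * ‖x - a‖ ^ 2 / 2)) • innerSL ℝ (x - a)) x := by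
  have h := (((hasFDerivAt_id x).sub_const a).norm_sq.const_mul (-α / 2)).exp
  simp only [id, fun t : ℝ => show -α / 2 * t = -α * t / 2 by ring] at h
  refine h.congr_fderiv ?_
  ext v
  simp only [smul_apply, ContinuousLinearMap.comp_id, innerSL_apply_apply, smul_eq_mul,
    nsmul_eq_mul]
  ring

theorem fderiv_exp_neg_mul_norm_sub_sq :
    fderiv ℝ (fun y => exp (-α * ‖y - a‖ ^ 2 / 2)) =
      fun x => (-α * exp (-α * ‖x - a‖ ^ 2 / 2)) • innerSL ℝ (x - a) :=
  funext fun x => (hasFDerivAt_exp_neg_mul_norm_sub_sq α a x).fderiv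

theorem gradient_exp_neg_mul_norm_sub_sq [CompleteSpace E] (x : E) :
    gradient (fun y => exp (-α * ‖y - a‖ ^ 2 / 2)) x =
      (-α * exp (-α * ‖x - a‖ ^ 2 / 2)) • (x - a) := by
  refine (hasGradientAt_iff_hasFDerivAt.2 ?_).gradient
  rw [map_smul]
  exact hasFDerivAt_exp_neg_mul_norm_sub_sq α a x

theorem fderiv_fderiv_exp_neg_mul_norm_sub_sq_apply (x v : E) :
    fderiv ℝ (fderiv ℝ fun y => exp (-α * ‖y - a‖ ^ 2 / 2)) x v v =
      exp (-α * ‖x - a‖ ^ 2 / 2) * (α ^ 2 * ⟪x - a, v⟫_ℝ ^ 2 - α * ‖v‖ ^ 2) := by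
  have h : HasFDerivAt (fun y => (-α * exp (-α * ‖y - a‖ ^ 2 / 2)) • innerSL ℝ (y - a)) _ x :=
    ((hasFDerivAt_exp_neg_mul_norm_sub_sq α a x).const_mul (-α)).smul
      ((innerSL ℝ).hasFDerivAt.comp x ((hasFDerivAt_id x).sub_const a))
  rw [fderiv_exp_neg_mul_norm_sub_sq, h.fderiv]
  simp only [add_apply, smul_apply, ContinuousLinearMap.comp_id,
    ContinuousLinearMap.smulRight_apply, innerSL_apply_apply, smul_eq_mul]
  rw [innerSL_apply_apply, real_inner_self_eq_norm_sq]
  ring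

end Gaussian

theorem EuclideanSpace.sum_inner_single_one_sq {ι : Type*} [Fintype ι] [DecidableEq ι]
    (v : EuclideanSpace ℝ ι) : ∑ i, ⟪v, EuclideanSpace.single i 1⟫_ℝ ^ 2 = ‖v‖ ^ 2 := by
  simp [EuclideanSpace.inner_single_right, EuclideanSpace.real_norm_sq_eq]

section Generator

variable {d : ℕ}

theorem lap_sub_const (f : EuclideanSpace ℝ (Fin d) → ℝ) (c : ℝ) (x : EuclideanSpace ℝ (Fin d)) :
    lap (fun y => f y - c) x = lap f x := by
  have h : fderiv ℝ (fun y => f y - c) = fderiv ℝ f := funext fun _ => fderiv_sub_const c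
  rw [lap, lap, h]

theorem lap_exp_neg_mul_norm_sub_sq (α : ℝ) (a x : EuclideanSpace ℝ (Fin d)) :
    lap (fun y => exp (-α * ‖y - a‖ ^ 2 / 2)) x =
      exp (-α * ‖x - a‖ ^ 2 / 2) * (α ^ 2 * ‖x - a‖ ^ 2 - d * α) := by
  simp only [lap, fderiv_fderiv_exp_neg_mul_norm_sub_sq_apply, ← Finset.mul_sum,
    Finset.sum_sub_distrib, PiLp.norm_single, norm_one, one_pow, Finset.sum_const,
    Finset.card_univ, Fintype.card_fin, nsmul_eq_mul, mul_one, EuclideanSpace.sum_inner_single_one_sq]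

theorem gen_exp_neg_mul_norm_sub_sq_sub_const
    (b : EuclideanSpace ℝ (Fin d) → EuclideanSpace ℝ (Fin d)) (k : EuclideanSpace ℝ (Fin d) → ℝ)
    (α c : ℝ) (a x : EuclideanSpace ℝ (Fin d)) :
    gen b k (fun y => exp (-α * ‖y - a‖ ^ 2 / 2) - c) x =
      exp (-α * ‖x - a‖ ^ 2 / 2) *
          (α ^ 2 * ‖x - a‖ ^ 2 / 2 - d * α / 2 - α * ⟪b x, x - a⟫_ℝ - k x) + k x * c := by
  rw [gen, lap_sub_const, gradient_sub_const, lap_exp_neg_mul_norm_sub_sq,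
    gradient_exp_neg_mul_norm_sub_sq, real_inner_smul_right]
  ring

end Generator

def barrierThreshold (d r R C : ℝ) : ℝ :=
  1 + (4 * d + 8 * R * C + 8 * C) / r ^ 2

theorem one_le_barrierThreshold {d r R C : ℝ} (hd : 0 ≤ d) (hR : 0 ≤ R) (hC : 0 ≤ C) :
    1 ≤ barrierThreshold d r R C :=
  le_add_of_nonneg_right (by positivity)

theorem add_lt_of_barrierThreshold_le {d r R C α q : ℝ} (hd : 0 ≤ d) (hr : 0 < r) (hR : 0 ≤ R)
    (hC : 0 ≤ C) (hα : barrierThreshold d r R C ≤ α) (hq : r / 2 ≤ q) :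
    d * α / 2 + α * (R * C) + C < α ^ 2 * q ^ 2 / 2 := by
  have hα₁ : 1 ≤ α := (one_le_barrierThreshold hd hR hC).trans hα
  have hαr : 4 * d + 8 * R * C + 8 * C < α * r ^ 2 := by
    have := (div_le_iff₀ (pow_pos hr 2)).1 (le_sub_iff_add_le'.2 hα)
    nlinarith [pow_pos hr 2]
  calc d * α / 2 + α * (R * C) + C ≤ α * (4 * d + 8 * R * C + 8 * C) / 8 := by
        nlinarith [mul_le_mul_of_nonneg_right hα₁ hC]
    _ < α * (α * r ^ 2) / 8 := by gcongr
    _ ≤ α ^ 2 * q ^ 2 / 2 := by nlinarith [mul_le_mul hq hq (by positivity) (by linarith)]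

theorem barrier_lemma {d : ℕ}
    (b : EuclideanSpace ℝ (Fin d) → EuclideanSpace ℝ (Fin d))
    (k : EuclideanSpace ℝ (Fin d) → ℝ) (hk0 : ∀ x, 0 ≤ k x)
    (xs : EuclideanSpace ℝ (Fin d)) (r R : ℝ) (hr : 0 < r) (hrR : r ≤ R)
    (C : ℝ) (hC : 0 ≤ C)
    (hbound : ∀ x, ‖x - xs‖ ≤ R → ‖b x‖ + k x ≤ C) :
    ∃ α₀ > (0:ℝ), ∀ α ≥ α₀, ∀ x : EuclideanSpace ℝ (Fin d),
      r / 2 ≤ ‖x - xs‖ → ‖x - xs‖ ≤ R →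
      0 < gen b k
        (fun y => Real.exp (-α * ‖y - xs‖ ^ 2 / 2) - Real.exp (-α * r ^ 2 / 2)) x := by
  have hR : 0 ≤ R := hr.le.trans hrR
  have hd : (0 : ℝ) ≤ d := d.cast_nonneg
  have hα₀ : 0 < barrierThreshold d r R C :=
    one_pos.trans_le (one_le_barrierThreshold hd hR hC)
  refine ⟨_, hα₀, fun α hα x hx₁ hx₂ => ?_⟩
  have hb : ‖b x‖ ≤ C := by linarith [hbound x hx₂, hk0 x]
  have hkC : k x ≤ C := by linarith [hbound x hx₂, norm_nonneg (b x)]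
  have hinner : α * ⟪b x, x - xs⟫_ℝ ≤ α * (R * C) := by
    refine mul_le_mul_of_nonneg_left ((real_inner_le_norm _ _).trans ?_) (hα₀.trans_le hα).le
    rw [mul_comm]
    exact mul_le_mul hx₂ hb (norm_nonneg _) hR
  have hcoef : 0 < α ^ 2 * ‖x - xs‖ ^ 2 / 2 - d * α / 2 - α * ⟪b x, x - xs⟫_ℝ - k x := by
    linarith [add_lt_of_barrierThreshold_le hd hr hR hC hα hx₁]
  rw [gen_exp_neg_mul_norm_sub_sq_sub_const]
  exact add_pos_of_pos_of_nonneg (mul_pos (exp_pos _) hcoef) (mul_nonneg (hk0 x) (exp_pos _).le)
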